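/- For α ∈ (0,1) and any finite ensemble ξ = {(p_k, ρ_k)} of density matrices with probability weights, the α-quantum Jensen–Shannon divergence Q_α(ξ) = S_α(∑_k p_k ρ_k) − ∑_k p_k S_α(ρ_k) is nonnegative. -/

import Mathlib

/-! Let `σ = ∑ₖ pₖ ρₖ` and let `U` diagonalize `σ`. For a Hermitian `A` diagonalized by `V`, the
diagonal of `U* A U` is `B λ(A)` with `B_ij = |(U* V)_ij|²` doubly stochastic, so Jensen's inequality
for a concave `f` gives `Tr f(A) ≤ ∑ᵢ f((U* A U)ᵢᵢ)` (Peierls). Since the diagonal of `U* σ U` is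
`λ(σ)` and is the `p`-average of the diagonals of the `U* ρₖ U`, a second use of Jensen gives the
concavity `∑ₖ pₖ Tr f(ρₖ) ≤ Tr f(σ)`, here for `f = x ^ α`. Concavity and monotonicity of `log`,
together with `1 / (1 - α) > 0`, conclude. -/

open Matrix BigOperators
open scoped ComplexOrder Kronecker

/-- Trace of `ρ^α` (real power), computed via the spectral decomposition. -/
noncomputable def traceRpow {N : ℕ} (ρ : Matrix (Fin N) (Fin N) ℂ) (α : ℝ) : ℝ :=
  if h : ρ.IsHermitian then ∑ i, (h.eigenvalues i) ^ α else 0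

/-- Quantum Rényi entropy `S_α(ρ) = (1/(1-α)) log Tr(ρ^α)`. -/
noncomputable def renyiEntropy {N : ℕ} (ρ : Matrix (Fin N) (Fin N) ℂ) (α : ℝ) : ℝ :=
  (1 / (1 - α)) * Real.log (traceRpow ρ α)

section DoublyStochastic

variable {n : Type*} [Fintype n] [DecidableEq n] {B : Matrix n n ℝ}

theorem Convex.mulVec_mem_of_mem_doublyStochastic {s : Set ℝ} (hs : Convex ℝ s)
    (hB : B ∈ doublyStochastic ℝ n) {x : n → ℝ} (hx : ∀ j, x j ∈ s) (i : n) :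
    (B *ᵥ x) i ∈ s :=
  hs.sum_mem (fun _ _ => nonneg_of_mem_doublyStochastic hB)
    (sum_row_of_mem_doublyStochastic hB i) fun j _ => hx j

theorem ConcaveOn.sum_le_sum_mulVec_of_mem_doublyStochastic {s : Set ℝ} {f : ℝ → ℝ}
    (hf : ConcaveOn ℝ s f) (hB : B ∈ doublyStochastic ℝ n) {x : n → ℝ} (hx : ∀ j, x j ∈ s) :
    ∑ j, f (x j) ≤ ∑ i, f ((B *ᵥ x) i) :=
  calc ∑ j, f (x j) = ∑ i, ∑ j, B i j * f (x j) := by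
        rw [Finset.sum_comm]
        simp only [← Finset.sum_mul, sum_col_of_mem_doublyStochastic hB, one_mul]
    _ ≤ ∑ i, f ((B *ᵥ x) i) := Finset.sum_le_sum fun i _ =>
        hf.le_map_sum (fun j _ => nonneg_of_mem_doublyStochastic hB)
          (sum_row_of_mem_doublyStochastic hB i) fun j _ => hx j

end DoublyStochastic

section Unitary

variable {𝕜 : Type*} [RCLike 𝕜] {n : Type*} [Fintype n] [DecidableEq n]

theorem Matrix.map_norm_sq_mem_doublyStochastic {W : Matrix n n 𝕜}
    (hW : W ∈ unitaryGroup n 𝕜) : W.map (‖·‖ ^ 2) ∈ doublyStochastic ℝ n := by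
  have hrow (i : n) : ((∑ j, ‖W i j‖ ^ 2 : ℝ) : 𝕜) = 1 := by
    simpa [mul_apply, one_apply, RCLike.mul_conj] using
      congrFun₂ (mem_unitaryGroup_iff.mp hW) i i
  have hcol (j : n) : ((∑ i, ‖W i j‖ ^ 2 : ℝ) : 𝕜) = 1 := by
    simpa [mul_apply, one_apply, RCLike.conj_mul] using
      congrFun₂ (mem_unitaryGroup_iff'.mp hW) j j
  refine mem_doublyStochastic_iff_sum.mpr ⟨fun i j => sq_nonneg ‖W i j‖, fun i => ?_, fun j => ?_⟩
  · exact_mod_cast hrow i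
  · exact_mod_cast hcol j

theorem Matrix.mul_diagonal_mul_star_apply_self (W : Matrix n n 𝕜) (d : n → ℝ) (i : n) :
    (W * diagonal (fun j => (d j : 𝕜)) * star W) i i = ((W.map (‖·‖ ^ 2) *ᵥ d) i : ℝ) := by
  rw [mul_apply]
  simp only [mul_diagonal, star_apply, RCLike.star_def, mulVec, dotProduct, map_apply]
  push_cast
  refine Finset.sum_congr rfl fun j _ => ?_
  rw [mul_right_comm, RCLike.mul_conj]

end Unitary

namespace Matrix.IsHermitian

variable {𝕜 : Type*} [RCLike 𝕜] {n : Type*} [Fintype n] [DecidableEq n]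
  {A : Matrix n n 𝕜} (hA : A.IsHermitian)

noncomputable def traceFun (f : ℝ → ℝ) : ℝ := ∑ i, f (hA.eigenvalues i)

theorem re_diag_conj_eigenvectorUnitary (i : n) :
    RCLike.re ((star (hA.eigenvectorUnitary : Matrix n n 𝕜) * A * hA.eigenvectorUnitary) i i) =
      hA.eigenvalues i := by
  have hdiag := hA.conjStarAlgAut_star_eigenvectorUnitary
  rw [Unitary.conjStarAlgAut_star_apply] at hdiag
  simp [hdiag]

theorem exists_mem_doublyStochastic_re_diag_conj {U : Matrix n n 𝕜}
    (hU : U ∈ unitaryGroup n 𝕜) : ∃ B ∈ doublyStochastic ℝ n,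
      ∀ i, RCLike.re ((star U * A * U) i i) = (B *ᵥ hA.eigenvalues) i := by
  set V : Matrix n n 𝕜 := (hA.eigenvectorUnitary : Matrix n n 𝕜)
  have hconj : star U * A * U = (star U * V) * diagonal (fun j => (hA.eigenvalues j : 𝕜)) *
      star (star U * V) := by
    conv_lhs => rw [hA.spectral_theorem, Unitary.conjStarAlgAut_apply]
    simp only [star_mul, star_star, Matrix.mul_assoc, Function.comp_def, V]
  refine ⟨_, map_norm_sq_mem_doublyStochastic
    (Submonoid.mul_mem _ (Unitary.star_mem hU) hA.eigenvectorUnitary.2), fun i => ?_⟩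
  rw [hconj, mul_diagonal_mul_star_apply_self, RCLike.ofReal_re]

theorem re_diag_conj_mem {s : Set ℝ} (hs : Convex ℝ s) (hA_mem : ∀ j, hA.eigenvalues j ∈ s)
    {U : Matrix n n 𝕜} (hU : U ∈ unitaryGroup n 𝕜) (i : n) :
    RCLike.re ((star U * A * U) i i) ∈ s := by
  obtain ⟨B, hB, hdiag⟩ := hA.exists_mem_doublyStochastic_re_diag_conj hU
  exact hdiag i ▸ hs.mulVec_mem_of_mem_doublyStochastic hB hA_mem i

theorem traceFun_le_sum_re_diag_conj {s : Set ℝ} {f : ℝ → ℝ} (hf : ConcaveOn ℝ s f)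
    (hA_mem : ∀ j, hA.eigenvalues j ∈ s) {U : Matrix n n 𝕜} (hU : U ∈ unitaryGroup n 𝕜) :
    hA.traceFun f ≤ ∑ i, f (RCLike.re ((star U * A * U) i i)) := by
  obtain ⟨B, hB, hdiag⟩ := hA.exists_mem_doublyStochastic_re_diag_conj hU
  simpa only [traceFun, hdiag] using hf.sum_le_sum_mulVec_of_mem_doublyStochastic hB hA_mem

end Matrix.IsHermitian

theorem ConcaveOn.sum_mul_traceFun_le_traceFun_sum {𝕜 : Type*} [RCLike 𝕜] {n : Type*} [Fintype n]
    [DecidableEq n] {s : Set ℝ} {f : ℝ → ℝ} (hf : ConcaveOn ℝ s f) {ι : Type*} [Fintype ι]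
    {ρ : ι → Matrix n n 𝕜} (hρ : ∀ k, (ρ k).IsHermitian) (hρ_mem : ∀ k j, (hρ k).eigenvalues j ∈ s)
    {p : ι → ℝ} (hp : ∀ k, 0 ≤ p k) (hps : ∑ k, p k = 1)
    (hσ : (∑ k, (p k : 𝕜) • ρ k).IsHermitian) :
    ∑ k, p k * (hρ k).traceFun f ≤ hσ.traceFun f := by
  set U := hσ.eigenvectorUnitary
  set d : ι → n → ℝ := fun k i => RCLike.re ((star (U : Matrix n n 𝕜) * ρ k * U) i i)
  have hd_mem (k : ι) (i : n) : d k i ∈ s := (hρ k).re_diag_conj_mem hf.1 (hρ_mem k) U.2 i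
  have heig (i : n) : hσ.eigenvalues i = ∑ k, p k * d k i := by
    rw [← hσ.re_diag_conj_eigenvectorUnitary i]
    simp [d, U, Matrix.mul_sum, Matrix.sum_mul, Matrix.sum_apply, RCLike.smul_re]
  calc ∑ k, p k * (hρ k).traceFun f ≤ ∑ k, p k * ∑ i, f (d k i) :=
        Finset.sum_le_sum fun k _ => mul_le_mul_of_nonneg_left
          ((hρ k).traceFun_le_sum_re_diag_conj hf (hρ_mem k) U.2) (hp k)
    _ = ∑ i, ∑ k, p k * f (d k i) := by
        simp only [Finset.mul_sum]
        exact Finset.sum_comm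
    _ ≤ ∑ i, f (∑ k, p k * d k i) := Finset.sum_le_sum fun i _ =>
        hf.le_map_sum (fun k _ => hp k) hps fun k _ => hd_mem k i
    _ = hσ.traceFun f := by simp only [Matrix.IsHermitian.traceFun, heig]

section TraceRpow

variable {N : ℕ}

theorem traceRpow_eq_traceFun {ρ : Matrix (Fin N) (Fin N) ℂ} (hρ : ρ.IsHermitian) (α : ℝ) :
    traceRpow ρ α = hρ.traceFun (· ^ α) :=
  dif_pos hρ

theorem traceRpow_pos {ρ : Matrix (Fin N) (Fin N) ℂ} (hρ : ρ.PosSemidef) (hρ0 : ρ ≠ 0) (α : ℝ) :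
    0 < traceRpow ρ α := by
  obtain ⟨i, hi⟩ := Function.ne_iff.mp (mt hρ.1.eigenvalues_eq_zero_iff.mp hρ0)
  rw [traceRpow_eq_traceFun hρ.1]
  exact Finset.sum_pos' (fun j _ => Real.rpow_nonneg (hρ.eigenvalues_nonneg j) α)
    ⟨i, Finset.mem_univ i, Real.rpow_pos_of_pos ((hρ.eigenvalues_nonneg i).lt_of_ne' hi) α⟩

theorem sum_mul_traceRpow_le_traceRpow_sum {α : ℝ} (hα₀ : 0 ≤ α) (hα₁ : α ≤ 1)
    {ι : Type*} [Fintype ι] {ρ : ι → Matrix (Fin N) (Fin N) ℂ} (hρ : ∀ k, (ρ k).PosSemidef)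
    {p : ι → ℝ} (hp : ∀ k, 0 ≤ p k) (hps : ∑ k, p k = 1) :
    ∑ k, p k * traceRpow (ρ k) α ≤ traceRpow (∑ k, (p k : ℂ) • ρ k) α := by
  have hσ : (∑ k, (p k : ℂ) • ρ k).PosSemidef := posSemidef_sum _ fun k _ =>
    (hρ k).smul (by exact_mod_cast hp k)
  simp only [traceRpow_eq_traceFun (hρ _).1, traceRpow_eq_traceFun hσ.1]
  exact (Real.concaveOn_rpow hα₀ hα₁).sum_mul_traceFun_le_traceFun_sum (fun k => (hρ k).1)
    (fun k => (hρ k).eigenvalues_nonneg) hp hps hσ.1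

end TraceRpow

/-- Nonnegativity of the α-quantum Jensen–Shannon divergence
`Q_α(ξ) = S_α(∑ p_k ρ_k) − ∑ p_k S_α(ρ_k)` for α ∈ (0,1). -/
theorem qjsd_nonneg {N m : ℕ} (α : ℝ) (hα : α ∈ Set.Ioo (0 : ℝ) 1)
    (ρ : Fin m → Matrix (Fin N) (Fin N) ℂ)
    (hρ : ∀ k, (ρ k).PosSemidef) (hTr : ∀ k, (ρ k).trace = 1)
    (p : Fin m → ℝ) (hp : ∀ k, 0 ≤ p k) (hps : ∑ k, p k = 1) :
    0 ≤ renyiEntropy (∑ k, (p k : ℂ) • ρ k) α - ∑ k, p k * renyiEntropy (ρ k) α := by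
  have hT (k : Fin m) : 0 < traceRpow (ρ k) α :=
    traceRpow_pos (hρ k) (fun h => by simpa [h] using hTr k) α
  have hmean : 0 < ∑ k, p k * traceRpow (ρ k) α := by
    simpa using (convex_Ioi (0 : ℝ)).sum_mem (fun k _ => hp k) hps fun k _ => hT k
  have hlog : ∑ k, p k * Real.log (traceRpow (ρ k) α) ≤
      Real.log (traceRpow (∑ k, (p k : ℂ) • ρ k) α) :=
    calc ∑ k, p k * Real.log (traceRpow (ρ k) α)
        ≤ Real.log (∑ k, p k * traceRpow (ρ k) α) := by
          simpa using strictConcaveOn_log_Ioi.concaveOn.le_map_sum (fun k _ => hp k) hps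
            fun k _ => hT k
      _ ≤ Real.log (traceRpow (∑ k, (p k : ℂ) • ρ k) α) := Real.log_le_log hmean
          (sum_mul_traceRpow_le_traceRpow_sum hα.1.le hα.2.le hρ hp hps)
  have hfactor : 0 ≤ 1 / (1 - α) := one_div_nonneg.mpr (sub_nonneg.mpr hα.2.le)
  simp only [renyiEntropy, mul_left_comm _ (1 / (1 - α)), ← Finset.mul_sum, ← mul_sub]
  exact mul_nonneg hfactor (sub_nonneg.mpr hlog)
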